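/- Let V be a nonzero finite-dimensional complex vector space and let Λ_1, …, Λ_k ∈ End(V) pairwise commuting with Λ_2, …, Λ_k semisimple. Vectors v_1, …, v_k ∈ V satisfy the block linear system Σ_{j} Λ_{k-(j-i)} v'_j = 0 for each row i (where (v'_1,…,v'_k) = (v_k, v_{k-1},…,v_1) and the block matrix is upper-triangular Toeplitz with Λ_k on the diagonal, Λ_{k-1} above, etc.) if and only if v_i ∈ Ker Λ_i ∩ Ker Λ_{i+1} ∩ ⋯ ∩ Ker Λ_k for each i = 1, …, k. In particular, the kernel of the block Toeplitz matrix Λ_hat has dimension Σ_{i=1}^k dim(Ker Λ_i ∩ ⋯ ∩ Ker Λ_k). -/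

import Mathlib

/-!
Row `i` of `Lhat V k Λ w = 0` says `∑_{l + j = i + k} Λ l (w j) = 0`. We show `Λ l (w j) = 0`
whenever `k ≤ l + j` by descending induction on `l`, then on `j`. Applying `Λ l` to the row
through `(l, j)` kills every other term: those with larger `l` by the outer hypothesis, those with
larger `j` by the inner one after commuting `Λ l` past their coefficient. What remains is
`Λ l (Λ l (w j)) = 0`, and a semisimple endomorphism has `ker f² = ker f`; the top component
`j = k` needs no semisimplicity, as its row has no other terms. The kernel is therefore a product
of intersections of kernels, and dimensions add.
-/

open Module

-- `Λ i` is the paper's `Λ_{i+1}`, and the paper's `k` is `k + 1` here.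
noncomputable def Lhat (V : Type*) [AddCommGroup V] [Module ℂ V] (k : ℕ)
    (Λ : Fin (k + 1) → Module.End ℂ V) :
    (Fin (k + 1) → V) →ₗ[ℂ] (Fin (k + 1) → V) :=
  LinearMap.pi fun i => ∑ j : Fin (k + 1),
    if i ≤ j then
      (Λ ⟨k - ((j : ℕ) - (i : ℕ)), by omega⟩) ∘ₗ LinearMap.proj j
    else 0

namespace Module.End

lemma IsSemisimple.apply_eq_zero_of_apply_apply_eq_zero {R M : Type*} [CommRing R]
    [AddCommGroup M] [Module R M] {f : End R M} (hf : f.IsSemisimple) {x : M}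
    (h : f (f x) = 0) : f x = 0 := by
  have hx : x ∈ f.genEigenspace 0 (2 : ℕ) := by
    rw [genEigenspace_zero_nat, LinearMap.mem_ker, pow_two, mul_apply, h]
  rw [hf.isFinitelySemisimple.genEigenspace_eq_eigenspace 0 (by norm_num)] at hx
  simpa using hx

end Module.End

theorem Submodule.finrank_pi_univ {K ι : Type*} [Field K] [Fintype ι] {φ : ι → Type*}
    [∀ i, AddCommGroup (φ i)] [∀ i, Module K (φ i)] [∀ i, FiniteDimensional K (φ i)]
    (p : ∀ i, Submodule K (φ i)) :
    finrank K (Submodule.pi Set.univ p) = ∑ i, finrank K (p i) := by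
  let e : (∀ i, p i) ≃ₗ[K] Submodule.pi Set.univ p :=
    { toFun x := ⟨fun i => x i, fun i _ => (x i).2⟩
      invFun y i := ⟨y.1 i, y.2 i trivial⟩
      map_add' _ _ := rfl
      map_smul' _ _ := rfl
      left_inv _ := rfl
      right_inv _ := rfl }
  rw [← e.finrank_eq, finrank_pi_fintype]

section Antidiagonal

variable {R M : Type*} [CommRing R] [AddCommGroup M] [Module R M] {k : ℕ}
  {Λ : Fin (k + 1) → Module.End R M} {w : Fin (k + 1) → M}

theorem apply_eq_zero_of_antidiagonal_sums_eq_zero (hc : ∀ i j, Commute (Λ i) (Λ j))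
    (hs : ∀ i : Fin (k + 1), 1 ≤ (i : ℕ) → (Λ i).IsSemisimple)
    (hw : ∀ i : Fin (k + 1), ∑ p : Fin (k + 1) × Fin (k + 1),
      (if (p.1 : ℕ) + p.2 = i + k then Λ p.1 (w p.2) else 0) = 0)
    (l j : Fin (k + 1)) (hlj : k ≤ (l : ℕ) + j) : Λ l (w j) = 0 := by
  induction l using WellFoundedGT.induction generalizing j with | _ l ihl => ?_
  induction j using WellFoundedGT.induction with | _ j ihj => ?_
  have row := hw ⟨l + j - k, by omega⟩
  simp only [show l + j - k + k = (l : ℕ) + j by omega] at row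
  have left (p : Fin (k + 1) × Fin (k + 1)) (hp : (p.1 : ℕ) + p.2 = l + j) (hpj : p.2 < j) :
      Λ p.1 (w p.2) = 0 :=
    ihl p.1 (by rw [Fin.lt_def] at hpj ⊢; omega) p.2 (by omega)
  have right (p : Fin (k + 1) × Fin (k + 1)) (hp : (p.1 : ℕ) + p.2 = l + j) (hpj : j < p.2) :
      Λ l (w p.2) = 0 :=
    ihj p.2 hpj (by rw [Fin.lt_def] at hpj; omega)
  have ne_of_ne (p : Fin (k + 1) × Fin (k + 1)) (hp : (p.1 : ℕ) + p.2 = l + j)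
      (hne : p ≠ (l, j)) : p.2 ≠ j := fun h =>
    hne (Prod.ext (Fin.ext (show (p.1 : ℕ) = l by rw [h] at hp; omega)) h)
  by_cases hj : j = Fin.last k
  · rw [Fintype.sum_eq_single (l, j), if_pos rfl] at row
    · exact row
    · intro p hne
      refine ite_eq_right_iff.mpr fun hp => left p hp ?_
      exact lt_of_le_of_ne (hj ▸ Fin.le_last p.2) (ne_of_ne p hp hne)
  · have hl : 1 ≤ (l : ℕ) := by
      have := Fin.val_lt_last hj; omega
    refine (hs l hl).apply_eq_zero_of_apply_apply_eq_zero ?_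
    have row' := congrArg (Λ l) row
    rw [map_sum, map_zero, Fintype.sum_eq_single (l, j), if_pos rfl] at row'
    · exact row'
    · intro p hne
      split_ifs with hp
      · rcases lt_or_gt_of_ne (ne_of_ne p hp hne) with hlt | hgt
        · rw [left p hp hlt, map_zero]
        · rw [← Module.End.mul_apply, (hc l p.1).eq, Module.End.mul_apply, right p hp hgt,
            map_zero]
      · exact map_zero _

end Antidiagonal

section Ker

variable {V : Type*} [AddCommGroup V] [Module ℂ V] {k : ℕ} {Λ : Fin (k + 1) → Module.End ℂ V}

theorem Lhat_apply (w : Fin (k + 1) → V) (i : Fin (k + 1)) :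
    Lhat V k Λ w i = ∑ p : Fin (k + 1) × Fin (k + 1),
      if (p.1 : ℕ) + p.2 = i + k then Λ p.1 (w p.2) else 0 := by
  rw [Fintype.sum_prod_type_right]
  simp only [Lhat, LinearMap.pi_apply, LinearMap.sum_apply]
  refine Finset.sum_congr rfl fun j _ => ?_
  split_ifs with hij
  · rw [Fintype.sum_eq_single ⟨k - (j - i), by omega⟩]
    · simp only [LinearMap.comp_apply, LinearMap.proj_apply]
      rw [if_pos (by simp only [Fin.le_def] at hij; omega)]
    · intro l hl
      rw [if_neg (fun h => hl (Fin.ext (by simp only; omega)))]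
  · exact (Finset.sum_eq_zero fun l _ => if_neg (by simp only [Fin.le_def] at hij; omega)).symm

theorem mem_ker_Lhat_iff (hc : ∀ i j, Commute (Λ i) (Λ j))
    (hs : ∀ i : Fin (k + 1), 1 ≤ (i : ℕ) → (Λ i).IsSemisimple) (w : Fin (k + 1) → V) :
    w ∈ LinearMap.ker (Lhat V k Λ) ↔ ∀ j l : Fin (k + 1), j.rev ≤ l → Λ l (w j) = 0 := by
  have rev_le_iff (j l : Fin (k + 1)) : j.rev ≤ l ↔ k ≤ (l : ℕ) + j := by
    rw [Fin.le_def, Fin.val_rev]; omega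
  simp only [LinearMap.mem_ker, funext_iff, Pi.zero_apply, Lhat_apply, rev_le_iff]
  refine ⟨fun hw j l => apply_eq_zero_of_antidiagonal_sums_eq_zero hc hs hw l j,
    fun h i => Finset.sum_eq_zero fun p _ => ite_eq_right_iff.mpr fun hp => h p.2 p.1 ?_⟩
  omega

theorem ker_Lhat_eq_pi (hc : ∀ i j, Commute (Λ i) (Λ j))
    (hs : ∀ i : Fin (k + 1), 1 ≤ (i : ℕ) → (Λ i).IsSemisimple) :
    LinearMap.ker (Lhat V k Λ) =
      Submodule.pi Set.univ fun j => ⨅ l : {l // j.rev ≤ l}, LinearMap.ker (Λ l) := by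
  ext w
  simp [mem_ker_Lhat_iff hc hs]

end Ker

theorem stmt16_general
    (V : Type*) [AddCommGroup V] [Module ℂ V] [FiniteDimensional ℂ V]
    (k : ℕ) (Λ : Fin (k + 1) → Module.End ℂ V)
    (hc : ∀ i j, Commute (Λ i) (Λ j))
    (hs : ∀ i : Fin (k + 1), 1 ≤ (i : ℕ) → (Λ i).IsSemisimple) :
    (∀ w : Fin (k + 1) → V, w ∈ LinearMap.ker (Lhat V k Λ) ↔
      ∀ j l : Fin (k + 1), j.rev ≤ l → Λ l (w j) = 0) ∧
    finrank ℂ ↥(LinearMap.ker (Lhat V k Λ)) =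
      ∑ i : Fin (k + 1), finrank ℂ
        ↥(⨅ l : {l : Fin (k + 1) // i ≤ l}, LinearMap.ker (Λ (l : Fin (k + 1)))) := by
  refine ⟨mem_ker_Lhat_iff hc hs, ?_⟩
  rw [ker_Lhat_eq_pi hc hs, Submodule.finrank_pi_univ]
  exact Fintype.sum_equiv Fin.revPerm _ _ fun _ => rfl

/-- for a normal form (`Λ_i` pairwise commuting, `Λ_2, …` semisimple),
`w` lies in the kernel of the block Toeplitz matrix `Λ̂` iff each component `w_j` lies
in `Ker Λ_l` for all `l ≥ rev j` (equivalently, the 1-indexed condition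
`v_i ∈ Ker Λ_i ∩ ⋯ ∩ Ker Λ_k` for the reversed vector). In particular
`dim Ker Λ̂ = Σ_i dim (Ker Λ_i ∩ ⋯ ∩ Ker Λ_k)`. -/
theorem stmt16
    (V : Type*) [AddCommGroup V] [Module ℂ V] [FiniteDimensional ℂ V] [Nontrivial V]
    (k : ℕ) (Λ : Fin (k + 1) → Module.End ℂ V)
    (hc : ∀ i j, Commute (Λ i) (Λ j))
    (hs : ∀ i : Fin (k + 1), 1 ≤ (i : ℕ) → (Λ i).IsSemisimple) :
    (∀ w : Fin (k + 1) → V, w ∈ LinearMap.ker (Lhat V k Λ) ↔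
      ∀ j l : Fin (k + 1), j.rev ≤ l → Λ l (w j) = 0) ∧
    finrank ℂ ↥(LinearMap.ker (Lhat V k Λ)) =
      ∑ i : Fin (k + 1), finrank ℂ
        ↥(⨅ l : {l : Fin (k + 1) // i ≤ l}, LinearMap.ker (Λ (l : Fin (k + 1)))) :=
  stmt16_general V k Λ hc hs
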